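/- Let F be a local field with ring of integers 𝔬 and maximal ideal 𝔭, char residue field ≠ 2, ℓ ≥ 2, a ∈ F^×, y ∈ F^{ℓ−1}. Suppose x̄(y)·j_{1,ℓ}(diag(a,a⁻¹)) = u·k where u ∈ GL_{2ℓ+1}(F) is upper unitriangular and k ∈ GL_{2ℓ+1}(𝔬) is a matrix all of whose entries are in 𝔬, whose diagonal entries lie in 1 + 𝔭, and whose below-diagonal entries lie in 𝔭 except possibly the (2ℓ+1,1) entry which lies in ϖ𝔬. Then a ∈ 1 + 𝔭 and every entry of y lies in 𝔭. -/

import Mathlib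

/-! Since `u` is upper unitriangular, the last row of `u * k` is the last row of `k`. The last row
of `x̄(y) * j_{1,ℓ}(diag(a, a⁻¹))` carries `a⁻¹` on the diagonal and the entries `-y_i`
below it, so the hypotheses on `k` give `a⁻¹ ∈ 1 + 𝔭` (hence `a ∈ 1 + 𝔭`) and `y_i ∈ 𝔭`. -/

open Matrix

/-- The lower unitriangular matrix `x̄(y) ∈ SO_{2ℓ+1}(F)` determined by `y`. -/
def xbar (F : Type*) [Field F] (l : ℕ) (y : Fin (l - 1) → F) :
    Matrix (Fin (2 * l + 1)) (Fin (2 * l + 1)) F :=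
  fun i j =>
    if i = j then 1
    else if h : (j : ℕ) = 0 ∧ 1 ≤ (i : ℕ) ∧ (i : ℕ) ≤ l - 1 then y ⟨(i : ℕ) - 1, by omega⟩
    else if h' : (i : ℕ) = 2 * l ∧ l + 1 ≤ (j : ℕ) ∧ (j : ℕ) ≤ 2 * l - 1 then
      -y ⟨2 * l - 1 - (j : ℕ), by omega⟩
    else 0

/-- `j_{1,ℓ}(diag(a, a⁻¹)) = diag(a, I_{2ℓ−1}, a⁻¹)`. -/
def jemb (F : Type*) [Field F] (l : ℕ) (a : F) :
    Matrix (Fin (2 * l + 1)) (Fin (2 * l + 1)) F :=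
  fun i j =>
    if i = j then (if (i : ℕ) = 0 then a else if (i : ℕ) = 2 * l then a⁻¹ else 1) else 0

/-- An element of `F` belongs to the maximal ideal `𝔭` of the valuation ring `O`. -/
def memP {F : Type*} [Field F] (O : ValuationSubring F) (x : F) : Prop :=
  ∃ p : O, p ∈ IsLocalRing.maximalIdeal O ∧ (p : F) = x

section MaximalIdeal

variable {F : Type*} [Field F] {O : ValuationSubring F}

theorem memP_iff_valuation_lt_one {x : F} : memP O x ↔ O.valuation x < 1 := by
  constructor
  · rintro ⟨p, hp, rfl⟩
    exact (O.valuation_lt_one_iff p).1 hp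
  · intro hx
    let p : O := ⟨x, O.mem_of_valuation_le_one x hx.le⟩
    exact ⟨p, (O.valuation_lt_one_iff p).2 hx, rfl⟩

theorem memP_neg {x : F} (hx : memP O x) : memP O (-x) := by
  rw [memP_iff_valuation_lt_one] at hx ⊢
  rwa [Valuation.map_neg]

theorem memP_inv_sub_one {a : F} (ha : memP O (a - 1)) : memP O (a⁻¹ - 1) := by
  rw [memP_iff_valuation_lt_one] at ha ⊢
  have hva : O.valuation a = 1 := by
    simpa using Valuation.map_one_add_of_lt _ ha
  have ha0 : a ≠ 0 := by rintro rfl; simp at hva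
  have hfactor : a⁻¹ - 1 = -a⁻¹ * (a - 1) := by field_simp; ring
  rw [hfactor, Valuation.map_mul, Valuation.map_neg, map_inv₀, hva, inv_one, one_mul]
  exact ha

end MaximalIdeal

theorem Matrix.mul_apply_last_of_upper_unitriangular {R : Type*} [Semiring R] {n : ℕ}
    {u : Matrix (Fin (n + 1)) (Fin (n + 1)) R}
    (hu_upper : ∀ i j : Fin (n + 1), (j : ℕ) < (i : ℕ) → u i j = 0)
    (hu_last : u (Fin.last n) (Fin.last n) = 1) (k : Matrix (Fin (n + 1)) (Fin (n + 1)) R)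
    (j : Fin (n + 1)) : (u * k) (Fin.last n) j = k (Fin.last n) j := by
  rw [Matrix.mul_apply, Finset.sum_eq_single (Fin.last n), hu_last, one_mul]
  · intro m _ hm
    rw [hu_upper _ _ (Fin.lt_last_iff_ne_last.2 hm), zero_mul]
  · simp

section BottomRow

variable {F : Type*} [Field F] {l : ℕ}

theorem jemb_eq_diagonal (a : F) :
    jemb F l a = diagonal fun i : Fin (2 * l + 1) =>
      if (i : ℕ) = 0 then a else if (i : ℕ) = 2 * l then a⁻¹ else 1 := by
  ext i j
  simp only [jemb, diagonal_apply]

theorem xbar_mul_jemb_last_last (hl : 0 < l) (y : Fin (l - 1) → F) (a : F) :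
    (xbar F l y * jemb F l a) (Fin.last _) (Fin.last _) = a⁻¹ := by
  rw [jemb_eq_diagonal, mul_diagonal]
  simp [xbar, hl.ne']

theorem xbar_mul_jemb_last_apply (y : Fin (l - 1) → F) (a : F) (i : Fin (l - 1)) :
    (xbar F l y * jemb F l a) (Fin.last _) ⟨2 * l - 1 - i, by omega⟩ = -y i := by
  rw [jemb_eq_diagonal, mul_diagonal]
  have hi := i.isLt
  have hne : Fin.last (2 * l) ≠ ⟨2 * l - 1 - i, by omega⟩ := by
    simp only [ne_eq, Fin.ext_iff, Fin.val_last]; omega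
  have hsub : 2 * l - 1 - (2 * l - 1 - i) = i := by omega
  simp [xbar, hne, hsub, show 2 * l - 1 - i ≠ 0 by omega, show 2 * l - 1 - i ≠ 2 * l by omega,
    show l < 2 * l - 1 - i by omega]

end BottomRow

/-- (Lemma 6.1, support of the Whittaker function.)  If
`x̄(y)·j_{1,ℓ}(diag(a,a⁻¹)) = u·k` with `u` upper unitriangular and `k` integral with
diagonal entries in `1 + 𝔭`, below-diagonal entries in `𝔭` except possibly the
`(2ℓ+1, 1)` entry which lies in `ϖ𝔬`, then `a ∈ 1 + 𝔭` and every entry of `y` is in `𝔭`. -/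
theorem stmt11 (F : Type*) [Field F] (O : ValuationSubring F)
    (l : ℕ) (hl : 2 ≤ l) (a : F) (y : Fin (l - 1) → F)
    (u k : Matrix (Fin (2 * l + 1)) (Fin (2 * l + 1)) F)
    (hu_upper : ∀ i j : Fin (2 * l + 1), (j : ℕ) < (i : ℕ) → u i j = 0)
    (hu_diag : ∀ i : Fin (2 * l + 1), u i i = 1)
    (hk_diag : ∀ i : Fin (2 * l + 1), memP O (k i i - 1))
    (hk_below : ∀ i j : Fin (2 * l + 1), (j : ℕ) < (i : ℕ) →
      ¬((i : ℕ) = 2 * l ∧ (j : ℕ) = 0) → memP O (k i j))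
    (heq : xbar F l y * jemb F l a = u * k) :
    memP O (a - 1) ∧ ∀ i, memP O (y i) := by
  have hrow (j : Fin (2 * l + 1)) :
      k (Fin.last _) j = (xbar F l y * jemb F l a) (Fin.last _) j := by
    rw [heq, mul_apply_last_of_upper_unitriangular hu_upper (hu_diag _)]
  refine ⟨?_, fun i => ?_⟩
  · have hinv := hk_diag (Fin.last _)
    rw [hrow, xbar_mul_jemb_last_last (by omega)] at hinv
    simpa using memP_inv_sub_one hinv
  · have hi := i.isLt
    have hy := hk_below (Fin.last _) ⟨2 * l - 1 - i, by omega⟩ (by simp only [Fin.val_last]; omega)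
      (by simp only [Fin.val_last]; omega)
    rw [hrow, xbar_mul_jemb_last_apply] at hy
    simpa using memP_neg hy
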